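/- arXiv:2311.04010 — 3 statements merged into one kernel-verified Lean document; each statement's English description precedes it below -/
import Mathlib

section
/- Let F be a group, let K ≤ F with N_F(K) = K, and let Φ be an outer automorphism class (a coset of Inn(F) in Aut(F)) such that some φ ∈ Φ satisfies φ(K) = K. Then the restriction of Φ to K is a well-defined outer automorphism of K: if φ₁, φ₂ ∈ Φ both satisfy φᵢ(K) = K, then φ₁|_K and φ₂|_K differ by an inner automorphism of K. -/
/-- if `K` is its own normalizer and `φ₁, φ₂` are in the same outer class and
both preserve `K`, then their restrictions to `K` differ by an inner automorphism of `K`. -/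
theorem stmt11 {F : Type*} [Group F] (K : Subgroup F) (hK : Subgroup.normalizer (K : Set F) = K)
    (φ₁ φ₂ : MulAut F)
    (hout : ∃ g : F, ∀ x : F, φ₂ x = g⁻¹ * φ₁ x * g)
    (h₁ : Subgroup.map φ₁.toMonoidHom K = K)
    (h₂ : Subgroup.map φ₂.toMonoidHom K = K) :
    ∃ k ∈ K, ∀ x ∈ K, φ₂ x = k⁻¹ * φ₁ x * k := by
  obtain ⟨g, hg⟩ := hout
  have hgK : g ∈ K := by
    rw [← hK, Subgroup.mem_normalizer_iff]
    intro h
    constructor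
    · intro hh
      have hh' : h ∈ Subgroup.map φ₂.toMonoidHom K := h₂.symm ▸ hh
      obtain ⟨x, hxK, hx⟩ := hh'
      have hx' : (h : F) = g⁻¹ * φ₁ x * g := by
        rw [← hx]; exact hg x
      have : g * h * g⁻¹ = φ₁ x := by rw [hx']; group
      rw [this, ← h₁]
      exact ⟨x, hxK, rfl⟩
    · intro hh
      have hh' : g * h * g⁻¹ ∈ Subgroup.map φ₁.toMonoidHom K := h₁.symm ▸ hh
      obtain ⟨x, hxK, hx⟩ := hh'
      have : h = φ₂ x := by
        rw [hg x, show (φ₁ x : F) = g*h*g⁻¹ from hx]; group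
      rw [this, ← h₂]
      exact ⟨x, hxK, rfl⟩
  exact ⟨g, hgK, fun x _ => hg x⟩
end

section
/- Let F₃ be the free group on {a, b, c} and K = ⟨a, b⟩. For every automorphism χ of F₃ with χ(K) = K and χ(c) ∈ K c^{ε} K (which holds whenever the outer class of χ preserves the conjugacy class of K), there exists a unique automorphism in the outer class of χ of the form: a ↦ χ₀(a), b ↦ χ₀(b), c ↦ g c^{ε}, where χ₀ ∈ Aut(K), g ∈ K, ε ∈ {−1, 1}. -/
/-!
Conjugating `χ` by the right-hand factor `g₂` of `χ c = g₁ * c ^ ε * g₂` gives a representative.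
Two representatives differ by an inner automorphism `x ↦ v⁻¹ * x * v` with `v⁻¹ K v ⊆ K`.
Applying the retraction `F₃ → K` that kills `c` shows that `v` acts on `K` as conjugation by an
element of `K`, which turns the condition on the image of `c` into `v` commuting with `c`.
In a free group the centralizer of a generator is the cyclic group it generates, so `v` is a
power of `c`; then the retraction kills `v`, so `v` centralizes `K`, in particular `a`,
and the centralizers of the two generators `a` and `c` meet trivially.
-/

namespace FreeGroup

variable {α : Type*}

lemma mk_singleton_mem_zpowers (i : α) (s : Bool) : mk [(i, s)] ∈ Subgroup.zpowers (of i) := by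
  cases s
  · exact Subgroup.inv_mem _ (Subgroup.mem_zpowers (of i))
  · exact Subgroup.mem_zpowers (of i)

variable [DecidableEq α]

lemma toWord_of_mul {i : α} {z : FreeGroup α} (h : ∀ p ∈ z.toWord.head?, p.1 ≠ i) :
    (of i * z).toWord = (i, true) :: z.toWord := by
  conv_lhs => rw [← mk_toWord (x := z), of, mul_mk, toWord_mk]
  refine IsReduced.reduce_eq (List.isChain_cons.mpr ⟨fun p hp heq => ?_, isReduced_toWord⟩)
  exact absurd heq.symm (h p hp)

lemma toWord_mul_of {i : α} {z : FreeGroup α} (h : ∀ p ∈ z.toWord.getLast?, p.1 ≠ i) :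
    (z * of i).toWord = z.toWord ++ [(i, true)] := by
  conv_lhs => rw [← mk_toWord (x := z), of, mul_mk, toWord_mk]
  refine IsReduced.reduce_eq (List.isChain_append.mpr
    ⟨isReduced_toWord, .singleton _, fun p hp q hq heq => ?_⟩)
  simp only [List.head?_cons, Option.mem_def, Option.some.injEq] at hq
  subst hq
  exact absurd heq (h p hp)

lemma not_commute_of_of_ne_head_of_ne_getLast {i : α} {z : FreeGroup α} (hz : z ≠ 1)
    (hhead : ∀ p ∈ z.toWord.head?, p.1 ≠ i) (hlast : ∀ p ∈ z.toWord.getLast?, p.1 ≠ i) :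
    ¬ Commute z (of i) := by
  intro h
  have hw := congrArg toWord h.eq
  rw [toWord_mul_of hlast, toWord_of_mul hhead] at hw
  obtain ⟨p, t, hpt⟩ := List.exists_cons_of_ne_nil (mt toWord_eq_nil_iff.mp hz)
  rw [hpt] at hw hhead
  simp only [List.cons_append, List.cons.injEq] at hw
  exact hhead p rfl (by rw [hw.1])

/- Peel letters `of i` off either end of the reduced word of `z`; if neither end is such a
letter, `of i * z` and `z * of i` are reduced as written, and they differ. -/
theorem mem_zpowers_of_commute_of {i : α} {z : FreeGroup α} (h : Commute z (of i)) :
    z ∈ Subgroup.zpowers (of i) := by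
  induction hn : z.norm using Nat.strong_induction_on generalizing z with
  | _ n ih =>
  have peel : ∀ s t, (z = mk [(i, s)] * mk t ∨ z = mk t * mk [(i, s)]) → t.length < n →
      z ∈ Subgroup.zpowers (of i) := by
    intro s t hz ht
    have hsing := mk_singleton_mem_zpowers i s
    obtain ⟨k, hk⟩ := Subgroup.mem_zpowers_iff.mp hsing
    have hcomm : Commute (of i ^ k) (of i) := (Commute.refl _).zpow_left k
    have hmkt : mk t ∈ Subgroup.zpowers (of i) := by
      refine ih _ (lt_of_le_of_lt norm_mk_le ht) ?_ rfl
      rcases hz with hz | hz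
      · simpa [← hk, hz] using hcomm.inv_left.mul_left h
      · simpa [← hk, hz] using h.mul_left hcomm.inv_left
    rcases hz with hz | hz <;> rw [hz] <;> apply mul_mem <;> assumption
  by_cases hhead : ∀ p ∈ z.toWord.head?, p.1 ≠ i
  · by_cases hlast : ∀ p ∈ z.toWord.getLast?, p.1 ≠ i
    · by_cases hz : z = 1
      · exact hz ▸ one_mem _
      · exact absurd h (not_commute_of_of_ne_head_of_ne_getLast hz hhead hlast)
    push Not at hlast
    obtain ⟨⟨j, s⟩, hp, rfl⟩ := hlast
    have hw := List.dropLast_append_getLast? _ hp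
    refine peel s z.toWord.dropLast (.inr ?_) ?_
    · rw [mul_mk, hw, mk_toWord]
    · rw [← hn, norm, ← hw]; simp
  push Not at hhead
  obtain ⟨⟨j, s⟩, hp, rfl⟩ := hhead
  have hw := List.eq_cons_of_mem_head? hp
  refine peel s z.toWord.tail (.inl ?_) ?_
  · rw [mul_mk, List.singleton_append, ← hw, mk_toWord]
  · rw [← hn, norm, hw]; simp

def killOf (i : α) : FreeGroup α →* FreeGroup α := lift fun j => if j = i then 1 else of j

lemma killOf_of_self (i : α) : killOf i (of i) = 1 := by simp [killOf]

lemma killOf_of_of_ne {i j : α} (h : j ≠ i) : killOf i (of j) = of j := by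
  simp [killOf, h]

lemma killOf_eq_one_of_mem_zpowers {i : α} {z : FreeGroup α} (hz : z ∈ Subgroup.zpowers (of i)) :
    killOf i z = 1 := by
  obtain ⟨k, rfl⟩ := Subgroup.mem_zpowers_iff.mp hz
  rw [map_zpow, killOf_of_self, one_zpow]

lemma eq_one_of_mem_zpowers_of_mem_zpowers {i j : α} (hij : i ≠ j) {z : FreeGroup α}
    (hi : z ∈ Subgroup.zpowers (of i)) (hj : z ∈ Subgroup.zpowers (of j)) : z = 1 := by
  obtain ⟨k, rfl⟩ := Subgroup.mem_zpowers_iff.mp hj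
  rw [← killOf_eq_one_of_mem_zpowers hi, map_zpow, killOf_of_of_ne hij.symm]

theorem eq_one_of_commute_of_commute_of {i j : α} (hij : i ≠ j) {z : FreeGroup α}
    (hi : Commute z (of i)) (hj : Commute z (of j)) : z = 1 :=
  eq_one_of_mem_zpowers_of_mem_zpowers hij (mem_zpowers_of_commute_of hi)
    (mem_zpowers_of_commute_of hj)

end FreeGroup

namespace Stmt12

abbrev F₃ : Type := FreeGroup (Fin 3)

def a : F₃ := FreeGroup.of 0
def b : F₃ := FreeGroup.of 1
def c : F₃ := FreeGroup.of 2

/-- The free factor `K = ⟨a, b⟩` of `F₃`. -/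
def K : Subgroup F₃ := Subgroup.closure {a, b}

open FreeGroup (killOf killOf_of_self killOf_of_of_ne killOf_eq_one_of_mem_zpowers
  mem_zpowers_of_commute_of eq_one_of_commute_of_commute_of)

lemma a_mem_K : a ∈ K := Subgroup.subset_closure (Set.mem_insert _ _)

lemma killOf_two_of_mem_K {k : F₃} (hk : k ∈ K) : killOf 2 k = k := by
  refine MonoidHom.eqOn_closure (g := MonoidHom.id F₃) ?_ hk
  rintro x (rfl | rfl) <;> exact killOf_of_of_ne (by decide)

lemma commute_of_inv_mul_mul_eq {G : Type*} [Group G] {v x : G} (h : v⁻¹ * x * v = x) :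
    Commute v x :=
  (inv_mul_eq_iff_eq_mul.mp (by rwa [← mul_assoc])).symm

lemma eq_one_of_forall_conj_mem_K {v : F₃} {ε : ℤ} (hε : ε = 1 ∨ ε = -1)
    (hK : ∀ k ∈ K, v⁻¹ * k * v ∈ K) {g g' : F₃} (hg : g ∈ K) (hg' : g' ∈ K)
    (hc : v⁻¹ * (g * c ^ ε) * v = g' * c ^ ε) : v = 1 := by
  have hconj : ∀ k ∈ K, v⁻¹ * k * v = (killOf 2 v)⁻¹ * k * killOf 2 v := by
    intro k hk
    rw [← killOf_two_of_mem_K (hK k hk), map_mul, map_mul, map_inv,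
      killOf_two_of_mem_K hk]
  have hgg' : v⁻¹ * g * v = g' := by
    have := congrArg (killOf 2) hc
    simp only [map_mul, map_inv, map_zpow, c, killOf_of_self, one_zpow, mul_one,
      killOf_two_of_mem_K hg, killOf_two_of_mem_K hg'] at this
    rw [hconj g hg, this]
  have hvc : Commute v c := by
    have hcε : v⁻¹ * c ^ ε * v = c ^ ε := by
      refine mul_left_cancel (a := v⁻¹ * g * v) ?_
      calc v⁻¹ * g * v * (v⁻¹ * c ^ ε * v) = v⁻¹ * (g * c ^ ε) * v := by group
        _ = v⁻¹ * g * v * c ^ ε := by rw [hc, hgg']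
    have := (commute_of_inv_mul_mul_eq hcε).zpow_right ε
    rwa [← zpow_mul, show ε * ε = 1 by rcases hε with rfl | rfl <;> rfl, zpow_one] at this
  have hva : Commute v a := by
    refine commute_of_inv_mul_mul_eq ?_
    rw [hconj a a_mem_K, killOf_eq_one_of_mem_zpowers (mem_zpowers_of_commute_of hvc)]
    group
  exact eq_one_of_commute_of_commute_of (by decide) hvc hva

/-- any automorphism `χ` of `F₃` with `χ K = K` and `χ c ∈ K c^ε K` has a
unique representative of its outer class preserving `K` and sending `c` to `g c^ε`, `g ∈ K`. -/
theorem stmt12 (χ : MulAut F₃) (ε : ℤ) (hε : ε = 1 ∨ ε = -1)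
    (hK : Subgroup.map χ.toMonoidHom K = K)
    (hc : ∃ g₁ ∈ K, ∃ g₂ ∈ K, χ c = g₁ * c ^ ε * g₂) :
    ∃! χ' : MulAut F₃,
      (∃ w : F₃, ∀ x : F₃, χ' x = w⁻¹ * χ x * w) ∧
      Subgroup.map χ'.toMonoidHom K = K ∧
      (∃ g ∈ K, χ' c = g * c ^ ε) := by
  obtain ⟨g₁, hg₁, g₂, hg₂, hχc⟩ := hc
  refine existsUnique_of_exists_of_unique ⟨MulAut.conj g₂ * χ, ⟨g₂⁻¹, fun x => ?_⟩, ?_,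
    ⟨g₂ * g₁, mul_mem hg₂ hg₁, ?_⟩⟩ ?_
  · simp [mul_assoc]
  · rw [show (MulAut.conj g₂ * χ).toMonoidHom = (MulAut.conj g₂).toMonoidHom.comp χ.toMonoidHom
      from rfl, ← Subgroup.map_map, hK]
    exact Subgroup.mem_normalizer_iff_map_conj_eq.mp (Subgroup.le_normalizer hg₂)
  · simp only [MulAut.mul_apply, MulAut.conj_apply, hχc]
    group
  rintro ψ₁ ψ₂ ⟨⟨w₁, hw₁⟩, hψ₁K, g, hg, hψ₁c⟩ ⟨⟨w₂, hw₂⟩, hψ₂K, g', hg', hψ₂c⟩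
  have hψ : ∀ x, ψ₂ x = (w₁⁻¹ * w₂)⁻¹ * ψ₁ x * (w₁⁻¹ * w₂) := fun x => by
    rw [hw₁, hw₂]; group
  have hconjK : ∀ k ∈ K, (w₁⁻¹ * w₂)⁻¹ * k * (w₁⁻¹ * w₂) ∈ K := by
    intro k hk
    obtain ⟨k₀, hk₀, rfl⟩ := hψ₁K.symm ▸ hk
    rw [← hψ₂K]
    exact ⟨k₀, hk₀, hψ _⟩
  have hv := eq_one_of_forall_conj_mem_K hε hconjK hg hg' (by rw [← hψ₁c, ← hψ₂c, hψ])
  ext x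
  rw [hψ, hv]
  group

end Stmt12
end

section
/- Let F be a group and φ ∈ Aut(F). For x ∈ F set h = x⁻¹·φ(x). Then φ(h⁻¹)·h⁻¹·x⁻¹·φᵏ(u)·x = φ²(x⁻¹)·φᵏ(u)·x for all u ∈ F and k ∈ ℤ. Consequently φ²(x⁻¹)·φᵏ(u)·x = v has a solution (x, k) if and only if u or φ(u) is twisted φ²-conjugate to v. -/
/-!
Since `p ∼_ψ ψ p` (witness `w = p`), every `p` is twisted `ψ`-conjugate to all `ψᵐ p`, `m ∈ ℤ`.
With `ψ = φ²` this reduces `φᵏ u` to `u` or `φ u` according to the parity of `k`, and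
`φ² (x⁻¹) · p · x` is twisted `φ²`-conjugate to `p` with witness `x⁻¹`.
-/

namespace MulAut

variable {F : Type*} [Group F]

def TwistedConj (ψ : MulAut F) (p q : F) : Prop :=
  ∃ w : F, q = ψ w * p * w⁻¹

namespace TwistedConj

variable {ψ : MulAut F} {p q r : F}

@[refl]
theorem refl (ψ : MulAut F) (p : F) : TwistedConj ψ p p :=
  ⟨1, by simp⟩

@[symm]
theorem symm (h : TwistedConj ψ p q) : TwistedConj ψ q p := by
  obtain ⟨w, rfl⟩ := h
  exact ⟨w⁻¹, by simp only [map_inv]; group⟩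

@[trans]
theorem trans (hpq : TwistedConj ψ p q) (hqr : TwistedConj ψ q r) : TwistedConj ψ p r := by
  obtain ⟨w, rfl⟩ := hpq
  obtain ⟨w', rfl⟩ := hqr
  exact ⟨w' * w, by simp only [map_mul]; group⟩

theorem self_apply (ψ : MulAut F) (p : F) : TwistedConj ψ p (ψ p) :=
  ⟨p, by group⟩

theorem self_zpow_apply (ψ : MulAut F) (p : F) (m : ℤ) : TwistedConj ψ p ((ψ ^ m) p) := by
  induction m using Int.induction_on with
  | zero => exact refl ψ p
  | succ m ih =>
    rw [add_comm, zpow_one_add, mul_apply]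
    exact ih.trans (self_apply ψ _)
  | pred m ih =>
    have h := self_apply ψ ((ψ ^ (-(m : ℤ) - 1)) p)
    rw [← mul_apply, ← zpow_one_add, add_sub_cancel] at h
    exact ih.trans h.symm

theorem sq_self_or_apply_zpow_apply (φ : MulAut F) (u : F) (k : ℤ) :
    TwistedConj (φ ^ 2) u ((φ ^ k) u) ∨ TwistedConj (φ ^ 2) (φ u) ((φ ^ k) u) := by
  obtain ⟨m, rfl | rfl⟩ := k.even_or_odd'
  · left
    rw [zpow_mul, zpow_ofNat]
    exact self_zpow_apply _ u m
  · right
    rw [zpow_add_one, zpow_mul, zpow_ofNat, mul_apply]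
    exact self_zpow_apply _ (φ u) m

end TwistedConj

theorem apply_inv_mul_inv_mul_inv (φ : MulAut F) (x : F) :
    φ ((x⁻¹ * φ x)⁻¹) * (x⁻¹ * φ x)⁻¹ * x⁻¹ = (φ ^ 2) x⁻¹ := by
  simp only [mul_inv_rev, inv_inv, map_mul, map_inv, pow_two, mul_apply]
  group

end MulAut

open MulAut

/-- with `h = x⁻¹ · φ x` one has
`φ (h⁻¹) · h⁻¹ · x⁻¹ · φᵏ u · x = φ² (x⁻¹) · φᵏ u · x`; consequently
`φ² (x⁻¹) · φᵏ u · x = v` has a solution `(x, k)` iff `u` or `φ u` is twisted `φ²`-conjugate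
to `v`. -/
theorem stmt18 {F : Type*} [Group F] (φ : MulAut F) :
    (∀ (x u : F) (k : ℤ),
      φ ((x⁻¹ * φ x)⁻¹) * (x⁻¹ * φ x)⁻¹ * x⁻¹ * (φ ^ k) u * x
        = (φ ^ 2) (x⁻¹) * (φ ^ k) u * x) ∧
    (∀ u v : F,
      (∃ (x : F) (k : ℤ), (φ ^ 2) (x⁻¹) * (φ ^ k) u * x = v) ↔
      ((∃ w : F, v = (φ ^ 2) w * u * w⁻¹) ∨ (∃ w : F, v = (φ ^ 2) w * (φ u) * w⁻¹))) := by
  refine ⟨fun x u k => by rw [apply_inv_mul_inv_mul_inv], fun u v => ⟨?_, ?_⟩⟩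
  · rintro ⟨x, k, rfl⟩
    have hv : TwistedConj (φ ^ 2) ((φ ^ k) u) ((φ ^ 2) x⁻¹ * (φ ^ k) u * x) :=
      ⟨x⁻¹, by rw [inv_inv]⟩
    exact (TwistedConj.sq_self_or_apply_zpow_apply φ u k).imp (·.trans hv) (·.trans hv)
  · rintro (⟨w, rfl⟩ | ⟨w, rfl⟩)
    · exact ⟨w⁻¹, 0, by simp⟩
    · exact ⟨w⁻¹, 1, by simp⟩
end
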